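/- For n, k ∈ ℕ with k ∈ [2..⌊n/2⌋], the SEMO algorithm (which mutates by flipping exactly one uniformly random bit) can never compute the full Pareto front of OneJumpZeroJump_{n,k}: with probability 1, for every time t, the population at time t does not cover both extremal Pareto front points (k, n+k) and (n+k, k). More precisely, if the initial individual has at most n/2 ones, then 1^n never enters the population. -/
import Mathlib


/-- Number of ones in a bit-string. -/
def ones {n : ℕ} (x : Fin n → Bool) : ℕ := (Finset.univ.filter (fun i => x i = true)).card

/-- Number of zeros in a bit-string. -/
def zeros {n : ℕ} (x : Fin n → Bool) : ℕ := n - ones x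

/-- First objective of OneJumpZeroJump. -/
def f1 (n k : ℕ) (x : Fin n → Bool) : ℕ :=
  if ones x ≤ n - k ∨ ones x = n then k + ones x else n - ones x

/-- Second objective of OneJumpZeroJump. -/
def f2 (n k : ℕ) (x : Fin n → Bool) : ℕ :=
  if zeros x ≤ n - k ∨ zeros x = n then k + zeros x else n - zeros x

/-- `x` strictly dominates `y`. -/
def dominates (n k : ℕ) (x y : Fin n → Bool) : Prop :=
  f1 n k y ≤ f1 n k x ∧ f2 n k y ≤ f2 n k x ∧ (f1 n k y < f1 n k x ∨ f2 n k y < f2 n k x)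

/-- `x` is Pareto optimal: no point dominates it. -/
def paretoOptimal (n k : ℕ) (x : Fin n → Bool) : Prop :=
  ¬ ∃ y : Fin n → Bool, dominates n k y x

/-- `x` weakly dominates `y`. -/
def wdom (n k : ℕ) (x y : Fin n → Bool) : Prop :=
  f1 n k y ≤ f1 n k x ∧ f2 n k y ≤ f2 n k x

instance (n k : ℕ) (x y : Fin n → Bool) : Decidable (wdom n k x y) := by
  unfold wdom; infer_instance

/-- One step of the SEMO: pick a parent in `P`, flip one bit to get `x'`; if no member of `P`
weakly dominates `x'`, then `x'` enters the population and all members weakly dominated by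
`x'` are removed; otherwise the population is unchanged. -/
def semoStep (n k : ℕ) (P P' : Finset (Fin n → Bool)) : Prop :=
  ∃ x ∈ P, ∃ i : Fin n,
    ((∃ y ∈ P, wdom n k y (Function.update x i (! x i))) ∧ P' = P) ∨
    ((¬ ∃ y ∈ P, wdom n k y (Function.update x i (! x i))) ∧
      P' = insert (Function.update x i (! x i))
        (P.filter (fun z => ¬ wdom n k (Function.update x i (! x i)) z)))

lemma ones_le_n {n : ℕ} (x : Fin n → Bool) : ones x ≤ n := by
  unfold ones
  simpa using Finset.card_filter_le Finset.univ (fun i => x i = true)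

lemma ones_update {n : ℕ} (x : Fin n → Bool) (i : Fin n) :
    ones (Function.update x i (!x i)) =
      if x i = true then ones x - 1 else ones x + 1 := by
  unfold ones
  by_cases h : x i = true
  · rw [if_pos h]
    have hset : (Finset.univ.filter (fun j => Function.update x i (!x i) j = true))
        = (Finset.univ.filter (fun j => x j = true)).erase i := by
      ext j
      rcases eq_or_ne j i with rfl | hj
      · simp [Function.update_apply, h]
      · simp [Function.update_apply, hj]
    rw [hset, Finset.card_erase_of_mem (by simp [h])]
  · rw [if_neg h]
    have hb : x i = false := by simpa using h
    have hset : (Finset.univ.filter (fun j => Function.update x i (!x i) j = true))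
        = insert i (Finset.univ.filter (fun j => x j = true)) := by
      ext j
      rcases eq_or_ne j i with rfl | hj
      · simp [Function.update_apply, hb]
      · simp [Function.update_apply, hj]
    rw [hset, Finset.card_insert_of_notMem (by simp [hb])]

lemma ones_top {n : ℕ} : ones (fun _ : Fin n => true) = n := by
  unfold ones
  simp

theorem semo_cannot_optimize (n k : ℕ) (hk : 2 ≤ k) (h2k : 2 * k ≤ n)
    (pop : ℕ → Finset (Fin n → Bool)) (x0 : Fin n → Bool)
    (h0 : pop 0 = {x0}) (hx0 : 2 * ones x0 ≤ n)
    (hstep : ∀ t, semoStep n k (pop t) (pop (t + 1))) :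
    ∀ t, (fun _ => true) ∉ pop t := by
  have key : ∀ t, ∀ y ∈ pop t, ones y ≤ n - k := by
    intro t
    induction t with
    | zero =>
      intro y hy
      rw [h0, Finset.mem_singleton] at hy
      subst hy
      omega
    | succ t ih =>
      obtain ⟨x, hx, i, hcase⟩ := hstep t
      rcases hcase with ⟨_, hP⟩ | ⟨hno, hP⟩
      · rw [hP]; exact ih
      · intro y hy
        rw [hP, Finset.mem_insert] at hy
        rcases hy with rfl | hy
        · set x' := Function.update x i (!x i) with hx'
          have hxle := ih x hx
          have hxn := ones_le_n x
          have h1 : ones x' = if x i = true then ones x - 1 else ones x + 1 :=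
            ones_update x i
          by_cases hc : ones x' ≤ n - k
          · exact hc
          exfalso
          have hxi : x i = false := by
            by_contra hcon
            simp only [Bool.not_eq_false] at hcon
            rw [if_pos hcon] at h1
            omega
          rw [if_neg (by simp [hxi])] at h1
          have hox : ones x = n - k := by omega
          have hox' : ones x' = n - k + 1 := by omega
          apply hno
          refine ⟨x, hx, ?_⟩
          have hx'n := ones_le_n x'
          simp only [wdom, f1, f2, zeros, hox, hox']
          split_ifs <;> omega
        · exact ih y (Finset.mem_of_mem_filter y hy)
  intro t htop
  have := key t _ htop
  rw [ones_top] at this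
  omega
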